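/- Let N ≥ 1, let L = ((c_i),(θ_j)) ∈ LR^N(ℝ²) and let φ = (φ_j) ∈ (ℝ/2πℤ)^N be such that for every 1 ≤ j ≤ N, φ_j lies in the same orientation set as θ_j (that is, φ_j ∈ (A_{M_O(L)}^+)_j if θ_j ∈ (A_{M_O(L)}^+)_j, and φ_j ∈ (A_{M_O(L)}^−)_j if θ_j ∈ (A_{M_O(L)}^−)_j). Then L' := ((c_i),(φ_j)) belongs to LR^N(ℝ²), and L and L' lie in the same path-connected component of LR^N(ℝ²). -/

import Mathlib

open Real Set
open scoped Classical

noncomputable section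

abbrev Pt : Type := EuclideanSpace ℝ (Fin 2)

noncomputable def pt (x y : ℝ) : Pt := (WithLp.equiv 2 (Fin 2 → ℝ)).symm ![x, y]

def dot (u v : Pt) : ℝ := u 0 * v 0 + u 1 * v 1

noncomputable def nvec (θ : Real.Angle) : Pt := pt (-θ.sin) θ.cos

noncomputable def dirvec (θ : Real.Angle) : Pt := pt θ.cos θ.sin

noncomputable def angleOf (v : Pt) : Real.Angle := ((Complex.arg ⟨v 0, v 1⟩ : ℝ) : Real.Angle)

/-- The space of `N`-polygonal chains `(ℝ²)^{N+2}`. -/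
abbrev Chain (N : ℕ) := Fin (N + 2) → Pt

/-- Access the `i`-th point of a chain (junk value `0` out of range). -/
def cg {N : ℕ} (c : Chain N) (i : ℕ) : Pt := if h : i < N + 2 then c ⟨i, h⟩ else 0

/-- The `j`-th ray of a chain: `R_0 = (c_0,c_1]`, `R_j = [c_j, c_{j+1}]`. -/
def ray {N : ℕ} (c : Chain N) (j : ℕ) : Set Pt :=
  if j = 0 then segment ℝ (cg c 0) (cg c 1) \ {cg c 0}
  else segment ℝ (cg c j) (cg c (j + 1))

def Obscured {N : ℕ} (c : Chain N) : Prop :=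
  cg c 0 = cg c 1 ∨
    ∃ j k : ℕ, j ≤ N ∧ 1 ≤ k ∧ k ≤ N + 1 ∧ k ≠ j ∧ k ≠ j + 1 ∧ cg c k ∈ ray c j

def Grazing {N : ℕ} (c : Chain N) : Prop :=
  ∃ i : ℕ, 1 ≤ i ∧ i ≤ N ∧ cg c i ∈ openSegment ℝ (cg c (i - 1)) (cg c (i + 1))

/-- Obscuration-free, non-grazing chains. -/
def LO (N : ℕ) : Set (Chain N) := {c | ¬Obscured c ∧ ¬Grazing c}

/-- Access the angle of the `j`-th mirror, `1 ≤ j ≤ N` (junk out of range). -/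
def θg {N : ℕ} (θ : Fin N → Real.Angle) (j : ℕ) : Real.Angle :=
  if h : j - 1 < N then θ ⟨j - 1, h⟩ else 0

/-- Reflexion condition: at each mirror both adjacent dot products with `n(θ_j)`
are nonzero and of the same sign. -/
def IsReflexive {N : ℕ} (c : Chain N) (θ : Fin N → Real.Angle) : Prop :=
  ∀ j : ℕ, 1 ≤ j → j ≤ N →
    0 < dot (cg c (j + 1) - cg c j) (nvec (θg θ j)) *
        dot (cg c (j - 1) - cg c j) (nvec (θg θ j))

abbrev RChain (N : ℕ) := Chain N × (Fin N → Real.Angle)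

/-- The space of reflexive polygonal chains. -/
def LR (N : ℕ) : Set (RChain N) := {L | L.1 ∈ LO N ∧ IsReflexive L.1 L.2}

/-- The open arc `α + ε·(0,π)` in `ℝ/2πℤ`. -/
def arc (α : Real.Angle) (ε : ℤ) : Set Real.Angle :=
  {β | ∃ s : ℝ, 0 < s ∧ s < π ∧ β = α + (((ε : ℝ) * s : ℝ) : Real.Angle)}

/-- Positive orientation set of the `j`-th mirror. -/
def APlus {N : ℕ} (c : Chain N) (j : ℕ) : Set Real.Angle :=
  arc (angleOf (cg c j - cg c (j - 1))) ((-1) ^ j) ∩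
    arc (angleOf (cg c j - cg c (j + 1))) ((-1) ^ j)

/-- Negative orientation set of the `j`-th mirror. -/
def AMinus {N : ℕ} (c : Chain N) (j : ℕ) : Set Real.Angle :=
  arc (angleOf (cg c j - cg c (j - 1))) ((-1) ^ (j + 1)) ∩
    arc (angleOf (cg c j - cg c (j + 1))) ((-1) ^ (j + 1))

/-- The characteristic: index `j : Fin N` corresponds to the `(j+1)`-st mirror. -/
noncomputable def Car {N : ℕ} (L : RChain N) : Fin N → ℤ :=
  fun j => if θg L.2 (j.1 + 1) ∈ APlus L.1 (j.1 + 1) then 1 else -1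

abbrev Beam (N : ℕ) := Chain N × Chain N

def IsPrimaryBeam {N : ℕ} (F : Beam N) : Prop :=
  (∀ k : ℕ, 1 ≤ k → k ≤ N → cg F.1 k ≠ cg F.2 k) ∧
  cg F.1 0 = pt (-1) 0 ∧ cg F.2 0 = pt (-1) 0 ∧
  cg F.1 (N + 1) = cg F.2 (N + 1) ∧
  midpoint ℝ (cg F.1 1) (cg F.2 1) = pt 0 0

def lineThrough (p q : Pt) : Set Pt := {x | ∃ u : ℝ, x = p + u • (q - p)}

noncomputable def pickPt (S : Set Pt) : Pt := if h : S.Nonempty then h.choose else 0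

noncomputable def pickR (S : Set ℝ) : ℝ := if h : S.Nonempty then h.choose else 0

/-- `impact F t k` is the `(k+1)`-st impact point `P_{k+1}^t` of the `t`-polygonal chain. -/
noncomputable def impact {N : ℕ} (F : Beam N) (t : ℝ) : ℕ → Pt
  | 0 => (1 - t) • cg F.1 1 + t • cg F.2 1
  | k + 1 =>
    let i := k + 2
    let prev := impact F t k
    if (lineThrough (cg F.1 (i - 1)) (cg F.1 i) ∩
        lineThrough (cg F.2 (i - 1)) (cg F.2 i)).Nonempty then
      pickPt (lineThrough prev
          (pickPt (lineThrough (cg F.1 (i - 1)) (cg F.1 i) ∩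
            lineThrough (cg F.2 (i - 1)) (cg F.2 i))) ∩
        segment ℝ (cg F.1 i) (cg F.2 i))
    else
      (1 - pickR {l : ℝ | prev = (1 - l) • cg F.1 (i - 1) + l • cg F.2 (i - 1)}) • cg F.1 i +
        pickR {l : ℝ | prev = (1 - l) • cg F.1 (i - 1) + l • cg F.2 (i - 1)} • cg F.2 i

/-- The `t`-polygonal chain `P_t` of a (primary) beam. -/
noncomputable def tChain {N : ℕ} (F : Beam N) (t : ℝ) : Chain N :=
  fun i => if (i : ℕ) = 0 then impact F t 0 + pt (-1) 0 else impact F t ((i : ℕ) - 1)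

/-- The `k`-th mirror `S_k = [a_k, b_k]` of a beam. -/
def mirror {N : ℕ} (F : Beam N) (k : ℕ) : Set Pt := segment ℝ (cg F.1 k) (cg F.2 k)

def NonObscuration {N : ℕ} (F : Beam N) : Prop :=
  ∀ j : ℕ, j ≤ N → ∀ t ∈ Icc (0 : ℝ) 1, ∀ k : ℕ,
    1 ≤ k → k ≤ N + 1 → k ≠ j → k ≠ j + 1 → ray (tChain F t) j ∩ mirror F k = ∅

/-- Four reals are nonzero and of the same sign. -/
def SameSign₄ (x y z w : ℝ) : Prop := 0 < x * y ∧ 0 < x * z ∧ 0 < x * w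

/-- A unit normal vector to the direction `u`. -/
noncomputable def normalOf (u : Pt) : Pt := ‖u‖⁻¹ • pt (-u 1) (u 0)

def ReflexionCond {N : ℕ} (F : Beam N) : Prop :=
  ∀ i : ℕ, 1 ≤ i → i ≤ N →
    SameSign₄
      (dot (cg F.1 (i - 1) - cg F.1 i) (normalOf (cg F.2 i - cg F.1 i)))
      (dot (cg F.2 (i - 1) - cg F.2 i) (normalOf (cg F.2 i - cg F.1 i)))
      (dot (cg F.1 (i + 1) - cg F.1 i) (normalOf (cg F.2 i - cg F.1 i)))
      (dot (cg F.2 (i + 1) - cg F.2 i) (normalOf (cg F.2 i - cg F.1 i)))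

/-- The space of `N`-beams. -/
def Faisc (N : ℕ) : Set (Beam N) :=
  {F | IsPrimaryBeam F ∧ NonObscuration F ∧ ReflexionCond F}

/-- The centered polygonal chain `M(F) = P_{1/2}`. -/
noncomputable def MF {N : ℕ} (F : Beam N) : Chain N := tChain F (1 / 2)

/-- The reflexive polygonal chain induced by a beam. -/
noncomputable def MR {N : ℕ} (F : Beam N) : RChain N :=
  (MF F, fun j => angleOf (cg F.1 (j.1 + 1) - cg F.2 (j.1 + 1)))

/-- The characteristic of a beam. -/
noncomputable def CarF {N : ℕ} (F : Beam N) : Fin N → ℤ := Car (MR F)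

/-- The pair of polygonal chains `P_l(L)` built from a reflexive chain and mirror
half-lengths `la, lb` (indexed by `1 ≤ j ≤ N`). -/
noncomputable def Pl {N : ℕ} (L : RChain N) (la lb : ℕ → ℝ) : Beam N :=
  (fun i => if 1 ≤ (i : ℕ) ∧ (i : ℕ) ≤ N
      then L.1 i + la (i : ℕ) • dirvec (θg L.2 (i : ℕ)) else L.1 i,
   fun i => if 1 ≤ (i : ℕ) ∧ (i : ℕ) ≤ N
      then L.1 i - lb (i : ℕ) • dirvec (θg L.2 (i : ℕ)) else L.1 i)

/-- Minimal mirror-to-mirror distance of a reflexive chain. -/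
noncomputable def dR {N : ℕ} (L : RChain N) : ℝ :=
  sInf {r | ∃ i : ℕ, 1 ≤ i ∧ i ≤ N ∧
    r = min |dot (cg L.1 (i - 1) - cg L.1 i) (nvec (θg L.2 i))|
          |dot (cg L.1 (i + 1) - cg L.1 i) (nvec (θg L.2 i))|}

/-- Minimal distance from the non-adjacent mirrors to the rays. -/
noncomputable def dO {N : ℕ} (L : RChain N) : ℝ :=
  sInf {r | ∃ j k : ℕ, j ≤ N ∧ 1 ≤ k ∧ k ≤ N + 1 ∧ k ≠ j ∧ k ≠ j + 1 ∧
    r = Metric.infDist (cg L.1 k) (ray L.1 j)}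

/-- `K = max_{1 ≤ j ≤ N} max (la j) (lb j)`. -/
noncomputable def Kmax (N : ℕ) (la lb : ℕ → ℝ) : ℝ :=
  sSup {r | ∃ j : ℕ, 1 ≤ j ∧ j ≤ N ∧ r = max (la j) (lb j)}

/-- The subbeam `F_μ` of a beam. -/
noncomputable def subBeam {N : ℕ} (F : Beam N) (μ : ℝ) : Beam N :=
  (fun i => if (i : ℕ) = 0 then pt (-1) 0 else tChain F ((1 - μ) / 2) i,
   fun i => if (i : ℕ) = 0 then pt (-1) 0 else tChain F ((1 + μ) / 2) i)
section AuxStatement4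

lemma pt_apply_zero (x y : ℝ) : pt x y 0 = x := rfl

lemma pt_apply_one (x y : ℝ) : pt x y 1 = y := rfl

lemma mem_arc_iff {α β : Real.Angle} {ε : ℤ} (hε : ε = 1 ∨ ε = -1) :
    β ∈ arc α ε ↔ 0 < (ε : ℝ) * (β - α).sin := by
  constructor
  · rintro ⟨s, hs0, hsπ, rfl⟩
    have hs : 0 < Real.sin s := Real.sin_pos_of_pos_of_lt_pi hs0 hsπ
    rcases hε with rfl | rfl <;>
      simp [add_sub_cancel_left, Real.Angle.sin_coe, Real.sin_neg] <;> linarith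
  · intro h
    set x := (β - α).toReal with hxdef
    have hx : β = α + (x : Real.Angle) := by
      rw [hxdef, Real.Angle.coe_toReal]; abel
    have hsin : (β - α).sin = Real.sin x := by
      rw [← Real.Angle.sin_coe, hxdef, Real.Angle.coe_toReal]
    have hx1 : -π < x := Real.Angle.neg_pi_lt_toReal _
    have hx2 : x ≤ π := Real.Angle.toReal_le_pi _
    rcases hε with rfl | rfl
    · rw [hsin] at h; push_cast at h; rw [one_mul] at h
      have hlt : x < π := by
        rcases lt_or_eq_of_le hx2 with h' | h'
        · exact h'
        · exfalso; rw [h', Real.sin_pi] at h; exact lt_irrefl 0 h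
      have hpos : 0 < x := by
        by_contra h0; push_neg at h0
        have := Real.sin_nonpos_of_nonpos_of_neg_pi_le h0 hx1.le
        linarith
      exact ⟨x, hpos, hlt, by rw [hx]; norm_num⟩
    · rw [hsin] at h; push_cast at h
      have hneg : Real.sin x < 0 := by nlinarith
      have hpos : 0 < -x := by
        by_contra h0; push_neg at h0
        have := Real.sin_nonneg_of_nonneg_of_le_pi (by linarith) hx2
        linarith
      exact ⟨-x, hpos, by linarith, by rw [hx]; norm_num⟩

lemma mem_arc_iff_sin {α β : Real.Angle} {ε : ℤ} (hε : ε = 1 ∨ ε = -1) :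
    β ∈ arc α ε ↔ 0 < (ε • (β - α) : Real.Angle).sin := by
  rw [mem_arc_iff hε]
  rcases hε with rfl | rfl
  · simp
  · rw [neg_one_zsmul, Real.Angle.sin_neg]
    push_cast
    constructor <;> intro <;> linarith

lemma sin_pos_window {x : ℝ} (h : 0 < Real.sin x) : ∃ k : ℤ, 2*π*k < x ∧ x < 2*π*k + π := by
  have h2π : 0 < 2*π := by positivity
  set k := ⌊x / (2*π)⌋ with hk
  have hfl : (k : ℝ) ≤ x / (2*π) := Int.floor_le _
  have hfl' : x / (2*π) < k + 1 := Int.lt_floor_add_one _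
  have hy1 : 0 ≤ x - 2*π*k := by nlinarith [(le_div_iff₀ h2π).mp hfl]
  have hy2 : x - 2*π*k < 2*π := by nlinarith [(div_lt_iff₀ h2π).mp hfl']
  have hsy : Real.sin (x - 2*π*k) = Real.sin x := by
    rw [show x - 2*π*k = x - (k : ℝ)*(2*π) by ring, Real.sin_sub_int_mul_two_pi]
  have hsy' : 0 < Real.sin (x - 2*π*k) := by rw [hsy]; exact h
  have hy0 : 0 < x - 2*π*k := by
    rcases eq_or_lt_of_le hy1 with h0 | h0
    · exfalso; rw [← h0, Real.sin_zero] at hsy'; exact lt_irrefl 0 hsy'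
    · exact h0
  have hyπ : x - 2*π*k < π := by
    by_contra hge; push_neg at hge
    have h1 : 0 ≤ Real.sin (x - 2*π*k - π) :=
      Real.sin_nonneg_of_nonneg_of_le_pi (by linarith) (by linarith)
    have h2 := Real.sin_antiperiodic (x - 2*π*k - π)
    rw [show x - 2*π*k - π + π = x - 2*π*k by ring] at h2
    rw [h2] at hsy'
    linarith
  exact ⟨k, by linarith, by linarith⟩

lemma sin_pos_between {d s₁ s₂ s : ℝ} (h1 : s₁ ∈ Set.Ioo 0 π) (h2 : s₂ ∈ Set.Ioo 0 π)
    (hs : s ∈ segment ℝ s₁ s₂)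
    (hp1 : 0 < Real.sin (d + s₁)) (hp2 : 0 < Real.sin (d + s₂)) : 0 < Real.sin (d + s) := by
  rw [segment_eq_Icc'] at hs
  obtain ⟨k₁, hk₁, hk₁'⟩ := sin_pos_window hp1
  obtain ⟨k₂, hk₂, hk₂'⟩ := sin_pos_window hp2
  have hπ : 0 < π := Real.pi_pos
  have hkk : k₁ = k₂ := by
    rcases lt_trichotomy k₁ k₂ with hlt | heq | hlt
    · exfalso
      have hc : (k₁ : ℝ) + 1 ≤ k₂ := by exact_mod_cast Int.add_one_le_iff.mpr hlt
      have h2k : 2*π*((k₁:ℝ)+1) ≤ 2*π*k₂ := by nlinarith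
      linarith [h1.1, h2.2]
    · exact heq
    · exfalso
      have hc : (k₂ : ℝ) + 1 ≤ k₁ := by exact_mod_cast Int.add_one_le_iff.mpr hlt
      have h2k : 2*π*((k₂:ℝ)+1) ≤ 2*π*k₁ := by nlinarith
      linarith [h2.1, h1.2]
  subst hkk
  have hlow : 2*π*k₁ < d + s := by
    rcases le_total s₁ s₂ with hc | hc
    · have := hs.1; rw [min_eq_left hc] at this; linarith
    · have := hs.1; rw [min_eq_right hc] at this; linarith
  have hhigh : d + s < 2*π*k₁ + π := by
    rcases le_total s₁ s₂ with hc | hc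
    · have := hs.2; rw [max_eq_right hc] at this; linarith
    · have := hs.2; rw [max_eq_left hc] at this; linarith
  have hfin : 0 < Real.sin (d + s - 2*π*k₁) :=
    Real.sin_pos_of_pos_of_lt_pi (by linarith) (by linarith)
  rwa [show d + s - 2*π*k₁ = d + s - (k₁:ℝ)*(2*π) by ring,
    Real.sin_sub_int_mul_two_pi] at hfin

set_option maxHeartbeats 1000000 in
lemma joinedIn_arcs {α₁ α₂ θ φ : Real.Angle} {ε : ℤ} (hε : ε = 1 ∨ ε = -1)
    (hθ : θ ∈ arc α₁ ε ∩ arc α₂ ε) (hφ : φ ∈ arc α₁ ε ∩ arc α₂ ε) :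
    JoinedIn (arc α₁ ε ∩ arc α₂ ε) θ φ := by
  obtain ⟨s, hs0, hsπ, hθeq⟩ := hθ.1
  obtain ⟨s', hs0', hsπ', hφeq⟩ := hφ.1
  have hε2 : (ε : ℝ) * (ε : ℝ) = 1 := by rcases hε with rfl | rfl <;> norm_num
  set d : ℝ := (ε • (α₁ - α₂) : Real.Angle).toReal with hd
  have harc2 : ∀ s₀ : ℝ, (α₁ + (((ε : ℝ) * s₀ : ℝ) : Real.Angle)) ∈ arc α₂ ε ↔
      0 < Real.sin (d + s₀) := by
    intro s₀
    rw [mem_arc_iff_sin hε]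
    have h1 : α₁ + (((ε : ℝ) * s₀ : ℝ) : Real.Angle) - α₂ =
        (α₁ - α₂) + (((ε : ℝ) * s₀ : ℝ) : Real.Angle) := by abel
    have h2 : ε • ((α₁ - α₂) + (((ε : ℝ) * s₀ : ℝ) : Real.Angle)) =
        ε • (α₁ - α₂) + (s₀ : Real.Angle) := by
      rcases hε with rfl | rfl
      · norm_num
      · rw [smul_add]
        congr 1
        rw [show (((-1 : ℤ) : ℝ) * s₀ : ℝ) = -s₀ by push_cast; ring,
          Real.Angle.coe_neg, neg_one_zsmul, neg_neg]
    rw [h1, h2, ← Real.Angle.coe_toReal (ε • (α₁ - α₂) : Real.Angle), ← hd,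
      ← Real.Angle.coe_add, Real.Angle.sin_coe]
  have hp1 : 0 < Real.sin (d + s) := (harc2 s).mp (hθeq ▸ hθ.2)
  have hp2 : 0 < Real.sin (d + s') := (harc2 s').mp (hφeq ▸ hφ.2)
  have hcont : Continuous fun r : ℝ =>
      α₁ + ((((ε : ℝ) * ((1 - r) * s + r * s')) : ℝ) : Real.Angle) :=
    continuous_const.add (Real.Angle.continuous_coe.comp (by continuity))
  refine ⟨⟨⟨fun t => α₁ + ((((ε : ℝ) * ((1 - (t : ℝ)) * s + (t : ℝ) * s')) : ℝ) : Real.Angle),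
      hcont.comp continuous_subtype_val⟩, ?_, ?_⟩, ?_⟩
  · show α₁ + _ = θ
    rw [hθeq]
    norm_num
  · show α₁ + _ = φ
    rw [hφeq]
    norm_num
  · rintro ⟨t, ht0, ht1⟩
    show α₁ + _ ∈ _
    set st := (1 - t) * s + t * s' with hst
    have h0 : 0 < st := by
      nlinarith [mul_nonneg (sub_nonneg.mpr ht1) (sub_nonneg.mpr (min_le_left s s')),
        mul_nonneg ht0 (sub_nonneg.mpr (min_le_right s s')), lt_min hs0 hs0']
    have hπ' : st < π := by
      nlinarith [mul_nonneg (sub_nonneg.mpr ht1) (sub_nonneg.mpr (le_max_left s s')),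
        mul_nonneg ht0 (sub_nonneg.mpr (le_max_right s s')), max_lt hsπ hsπ']
    refine ⟨⟨st, h0, hπ', rfl⟩, ?_⟩
    rw [harc2 st]
    exact sin_pos_between ⟨hs0, hsπ⟩ ⟨hs0', hsπ'⟩
      ⟨1 - t, t, by linarith, ht0, by ring, by simp [smul_eq_mul, hst]⟩ hp1 hp2

lemma dot_nvec (v : Pt) (hv : ¬(v 0 = 0 ∧ v 1 = 0)) (θ : Real.Angle) :
    dot (-v) (nvec θ) = ‖(⟨v 0, v 1⟩ : ℂ)‖ * (θ - angleOf v).sin := by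
  set z : ℂ := ⟨v 0, v 1⟩ with hz
  have hz0 : z ≠ 0 := by
    simp only [hz, ne_eq, Complex.ext_iff, Complex.zero_re, Complex.zero_im]
    tauto
  have habs : 0 < ‖z‖ := norm_pos_iff.mpr hz0
  induction θ using Real.Angle.induction_on with
  | _ x =>
  have hcos : Real.cos (Complex.arg z) = v 0 / ‖z‖ := Complex.cos_arg hz0
  have hsin : Real.sin (Complex.arg z) = v 1 / ‖z‖ := Complex.sin_arg z
  have hang : ((x : Real.Angle) - angleOf v).sin = Real.sin (x - Complex.arg z) := by
    rw [angleOf, ← Real.Angle.coe_sub, Real.Angle.sin_coe]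
  rw [hang, Real.sin_sub, hcos, hsin]
  simp only [dot, nvec, PiLp.neg_apply, pt_apply_zero, pt_apply_one,
    Real.Angle.sin_coe, Real.Angle.cos_coe]
  field_simp
  ring

lemma dot_zero_left (v : Pt) : dot 0 v = 0 := by
  simp [dot, PiLp.zero_apply]

lemma prod_pos_iff_mem (u w : Pt) (hu : u ≠ 0) (hw : w ≠ 0) (θ : Real.Angle) (ε : ℤ)
    (hε : ε = 1 ∨ ε = -1) :
    0 < dot (-w) (nvec θ) * dot (-u) (nvec θ) ↔
      θ ∈ (arc (angleOf u) ε ∩ arc (angleOf w) ε) ∪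
        (arc (angleOf u) (-ε) ∩ arc (angleOf w) (-ε)) := by
  have hu' : ¬(u 0 = 0 ∧ u 1 = 0) := by
    rintro ⟨h0, h1⟩
    apply hu
    ext i
    fin_cases i <;> simpa
  have hw' : ¬(w 0 = 0 ∧ w 1 = 0) := by
    rintro ⟨h0, h1⟩
    apply hw
    ext i
    fin_cases i <;> simpa
  have hε' : -ε = 1 ∨ -ε = -1 := by rcases hε with rfl | rfl <;> norm_num
  rw [dot_nvec u hu', dot_nvec w hw']
  rw [Set.mem_union, Set.mem_inter_iff, Set.mem_inter_iff, mem_arc_iff hε, mem_arc_iff hε,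
    mem_arc_iff hε', mem_arc_iff hε']
  have hA : 0 < ‖(⟨u 0, u 1⟩ : ℂ)‖ := by
    apply norm_pos_iff.mpr
    simp only [ne_eq, Complex.ext_iff, Complex.zero_re, Complex.zero_im]
    tauto
  have hB : 0 < ‖(⟨w 0, w 1⟩ : ℂ)‖ := by
    apply norm_pos_iff.mpr
    simp only [ne_eq, Complex.ext_iff, Complex.zero_re, Complex.zero_im]
    tauto
  set a := (θ - angleOf u).sin
  set b := (θ - angleOf w).sin
  have hab : 0 < ‖(⟨w 0, w 1⟩ : ℂ)‖ * b * (‖(⟨u 0, u 1⟩ : ℂ)‖ * a) ↔ 0 < a * b := by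
    rw [show ‖(⟨w 0, w 1⟩ : ℂ)‖ * b * (‖(⟨u 0, u 1⟩ : ℂ)‖ * a)
        = (‖(⟨w 0, w 1⟩ : ℂ)‖ * ‖(⟨u 0, u 1⟩ : ℂ)‖) * (a * b) by ring]
    exact mul_pos_iff_of_pos_left (mul_pos hB hA)
  rw [hab, mul_pos_iff]
  rcases hε with rfl | rfl <;> push_cast <;>
    simp only [one_mul, neg_one_mul, neg_neg, neg_pos] <;> tauto

lemma reflCond_iff {N : ℕ} (c : Chain N) (j : ℕ)
    (hu : cg c j - cg c (j - 1) ≠ 0) (hw : cg c j - cg c (j + 1) ≠ 0) (θ : Real.Angle) :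
    0 < dot (cg c (j + 1) - cg c j) (nvec θ) * dot (cg c (j - 1) - cg c j) (nvec θ) ↔
      θ ∈ APlus c j ∪ AMinus c j := by
  have h1 : cg c (j + 1) - cg c j = -(cg c j - cg c (j + 1)) := (neg_sub _ _).symm
  have h2 : cg c (j - 1) - cg c j = -(cg c j - cg c (j - 1)) := (neg_sub _ _).symm
  rw [h1, h2, prod_pos_iff_mem _ _ hu hw θ ((-1) ^ j) (neg_one_pow_eq_or ℤ j)]
  unfold APlus AMinus
  rw [show ((-1 : ℤ)) ^ (j + 1) = -((-1 : ℤ) ^ j) by ring]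

end AuxStatement4

/-- changing the angles within the same orientation sets stays in the
same path-connected component of `LR^N`. -/
theorem statement4 (N : ℕ) (hN : 1 ≤ N) (L : RChain N) (hL : L ∈ LR N)
    (φ : Fin N → Real.Angle)
    (hφ : ∀ j : ℕ, 1 ≤ j → j ≤ N →
      (θg L.2 j ∈ APlus L.1 j → θg φ j ∈ APlus L.1 j) ∧
      (θg L.2 j ∈ AMinus L.1 j → θg φ j ∈ AMinus L.1 j)) :
    (L.1, φ) ∈ LR N ∧ JoinedIn (LR N) L (L.1, φ) := by
  obtain ⟨hLO, hRef⟩ := hL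
  have hvec : ∀ j : ℕ, 1 ≤ j → j ≤ N →
      cg L.1 j - cg L.1 (j - 1) ≠ 0 ∧ cg L.1 j - cg L.1 (j + 1) ≠ 0 := by
    intro j h1 h2
    have hp := hRef j h1 h2
    constructor
    · intro h0
      have hz : cg L.1 (j - 1) - cg L.1 j = 0 := by rw [← neg_sub, h0, neg_zero]
      rw [hz, dot_zero_left, mul_zero] at hp
      exact lt_irrefl 0 hp
    · intro h0
      have hz : cg L.1 (j + 1) - cg L.1 j = 0 := by rw [← neg_sub, h0, neg_zero]
      rw [hz, dot_zero_left, zero_mul] at hp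
      exact lt_irrefl 0 hp
  have hiff : ∀ j : ℕ, 1 ≤ j → j ≤ N → ∀ ψ : Real.Angle,
      (0 < dot (cg L.1 (j + 1) - cg L.1 j) (nvec ψ) *
        dot (cg L.1 (j - 1) - cg L.1 j) (nvec ψ)) ↔
        ψ ∈ APlus L.1 j ∪ AMinus L.1 j := fun j h1 h2 ψ =>
    reflCond_iff L.1 j (hvec j h1 h2).1 (hvec j h1 h2).2 ψ
  have hmemθ : ∀ j : ℕ, 1 ≤ j → j ≤ N → θg L.2 j ∈ APlus L.1 j ∪ AMinus L.1 j :=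
    fun j h1 h2 => (hiff j h1 h2 _).mp (hRef j h1 h2)
  have hmemφ : ∀ j : ℕ, 1 ≤ j → j ≤ N → θg φ j ∈ APlus L.1 j ∪ AMinus L.1 j := by
    intro j h1 h2
    rcases hmemθ j h1 h2 with h | h
    · exact Or.inl ((hφ j h1 h2).1 h)
    · exact Or.inr ((hφ j h1 h2).2 h)
  have hmem1 : (L.1, φ) ∈ LR N :=
    ⟨hLO, fun j h1 h2 => (hiff j h1 h2 _).mpr (hmemφ j h1 h2)⟩
  refine ⟨hmem1, ?_⟩
  have hθg : ∀ (ψ : Fin N → Real.Angle) (j : Fin N), θg ψ (j.1 + 1) = ψ j := by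
    intro ψ j
    simp only [θg, Nat.add_sub_cancel]
    rw [dif_pos j.2]
  have hJ : ∀ j : Fin N, JoinedIn {ψ : Real.Angle |
      0 < dot (cg L.1 (j.1 + 1 + 1) - cg L.1 (j.1 + 1)) (nvec ψ) *
        dot (cg L.1 (j.1 + 1 - 1) - cg L.1 (j.1 + 1)) (nvec ψ)} (L.2 j) (φ j) := by
    intro j
    have h1 : 1 ≤ j.1 + 1 := Nat.le_add_left _ _
    have h2 : j.1 + 1 ≤ N := j.2
    rw [← hθg L.2 j, ← hθg φ j]
    by_cases hc : θg L.2 (j.1 + 1) ∈ APlus L.1 (j.1 + 1)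
    · have hφc : θg φ (j.1 + 1) ∈ APlus L.1 (j.1 + 1) := (hφ _ h1 h2).1 hc
      have hj := joinedIn_arcs (neg_one_pow_eq_or ℤ (j.1 + 1)) hc hφc
      exact hj.mono fun ψ hψ => (hiff _ h1 h2 ψ).mpr (Or.inl hψ)
    · have hc' : θg L.2 (j.1 + 1) ∈ AMinus L.1 (j.1 + 1) :=
        (hmemθ _ h1 h2).resolve_left hc
      have hφc : θg φ (j.1 + 1) ∈ AMinus L.1 (j.1 + 1) := (hφ _ h1 h2).2 hc'
      have hj := joinedIn_arcs (neg_one_pow_eq_or ℤ (j.1 + 1 + 1)) hc' hφc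
      exact hj.mono fun ψ hψ => (hiff _ h1 h2 ψ).mpr (Or.inr hψ)
  choose γ hγ using hJ
  refine ⟨⟨⟨fun t => (L.1, fun j => γ j t),
      continuous_const.prodMk (continuous_pi fun j => (γ j).continuous)⟩, ?_, ?_⟩, ?_⟩
  · show (L.1, fun j => γ j 0) = L
    have he : (fun j => γ j 0) = L.2 := funext fun j => (γ j).source
    rw [he]
  · show (L.1, fun j => γ j 1) = (L.1, φ)
    have he : (fun j => γ j 1) = φ := funext fun j => (γ j).target
    rw [he]
  · intro t
    show (L.1, fun j => γ j t) ∈ LR N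
    refine ⟨hLO, ?_⟩
    intro j h1 h2
    have hj' : j - 1 < N := by omega
    have hje : j - 1 + 1 = j := by omega
    have hm := hγ ⟨j - 1, hj'⟩ t
    simp only [Set.mem_setOf_eq] at hm
    have hθgt : θg (fun j => γ j t) j = γ ⟨j - 1, hj'⟩ t := by
      simp only [θg]
      rw [dif_pos hj']
    rw [hθgt]
    rw [hje] at hm
    exact hm
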